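/- arXiv:0804.3744 — 2 statements merged into one kernel-verified Lean document; each statement's English description precedes it below -/
import Mathlib

section
/- Let κ : [0,∞) → [0,∞) be continuous, self-gravitating (κ(x) < κ̄(x) for all x > 0, where κ̄(x) = (2/x²)∫₀ˣ κ(t)·t dt), and satisfy x·κ(x) → C₂ as x → ∞ for some constant 0 ≤ C₂ < ∞. Define α(x) = (2/x)∫₀ˣ κ(t)·t dt. Then there exists an Einstein ring, i.e. some x > 0 with α(x) = x, if and only if κ(0) > 1. -/
/-!
Write `κ̄ x = (2 / x²) ∫₀ˣ κ t · t dt`, so that `α x = x · κ̄ x` and an Einstein ring is a solution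
of `κ̄ x = 1`. Since `κ̄' = (2 / x)(κ - κ̄)`, self-gravitation makes `κ̄` strictly decreasing on
`(0, ∞)`. It tends to `κ 0` at `0⁺`, and to `0` at `∞` because `t κ t` is bounded at infinity, so
that `∫₀ˣ κ t · t dt = O(x)`. Hence `κ̄` maps `(0, ∞)` onto `(0, κ 0)`, which contains `1` iff
`κ 0 > 1`.
-/

open Set Filter Topology Asymptotics intervalIntegral

lemma ContinuousOn.intervalIntegrable_of_Ici {f : ℝ → ℝ} {c a b : ℝ} (hf : ContinuousOn f (Ici c))
    (ha : c ≤ a) (hb : c ≤ b) : IntervalIntegrable f MeasureTheory.volume a b :=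
  (hf.mono fun _ ht => le_trans (le_min ha hb) ht.1).intervalIntegrable

lemma integral_isBigO_id_atTop {f : ℝ → ℝ} (hf : ContinuousOn f (Ici 0))
    (hbdd : f =O[atTop] fun _ => (1 : ℝ)) :
    (fun x => ∫ t in (0 : ℝ)..x, f t) =O[atTop] id := by
  obtain ⟨C, hC, hfC⟩ := hbdd.exists_pos
  obtain ⟨R, hR⟩ := eventually_atTop.1 hfC.bound
  set R₀ := max R 0
  refine .of_bound (‖∫ t in (0 : ℝ)..R₀, f t‖ + C) ?_
  filter_upwards [eventually_ge_atTop R₀, eventually_ge_atTop (1 : ℝ)] with x hxR hx1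
  have hR₀ : 0 ≤ R₀ := le_max_right _ _
  have htail : ‖∫ t in R₀..x, f t‖ ≤ C * (x - R₀) := by
    rw [← abs_of_nonneg (sub_nonneg.2 hxR)]
    exact norm_integral_le_of_norm_le_const fun t ht => by
      simpa using hR t ((le_max_left _ _).trans (uIoc_of_le hxR ▸ ht).1.le)
  rw [← integral_add_adjacent_intervals (hf.intervalIntegrable_of_Ici le_rfl hR₀)
    (hf.intervalIntegrable_of_Ici hR₀ (hR₀.trans hxR)), id,
    Real.norm_of_nonneg (show (0 : ℝ) ≤ x by linarith)]
  calc ‖(∫ t in (0 : ℝ)..R₀, f t) + ∫ t in R₀..x, f t‖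
      ≤ ‖∫ t in (0 : ℝ)..R₀, f t‖ + C * (x - R₀) := (norm_add_le _ _).trans (by gcongr)
    _ ≤ (‖∫ t in (0 : ℝ)..R₀, f t‖ + C) * x := by
      nlinarith [norm_nonneg (∫ t in (0 : ℝ)..R₀, f t)]

/-- The mean surface density `κ̄`; at `x = 0` it takes the junk value `0`. -/
noncomputable def meanDensity (κ : ℝ → ℝ) (x : ℝ) : ℝ :=
  (2 / x ^ 2) * ∫ t in (0 : ℝ)..x, κ t * t

section

variable {κ : ℝ → ℝ}

lemma deflection_eq_self_iff {x : ℝ} (hx : x ≠ 0) :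
    (2 / x) * (∫ t in (0 : ℝ)..x, κ t * t) = x ↔ meanDensity κ x = 1 := by
  rw [meanDensity]
  constructor <;> intro h <;> field_simp at h ⊢ <;> linarith

variable (hκ : ContinuousOn κ (Ici 0))
include hκ

lemma meanDensity_le {x M : ℝ} (hx : 0 < x) (hM : ∀ t ∈ Icc 0 x, κ t ≤ M) :
    meanDensity κ x ≤ M := by
  have h : (∫ t in (0 : ℝ)..x, κ t * t) ≤ ∫ t in (0 : ℝ)..x, M * t :=
    integral_mono_on hx.le ((hκ.mul continuousOn_id).intervalIntegrable_of_Ici le_rfl hx.le)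
      ((continuous_const_mul M).intervalIntegrable _ _)
      fun t ht => mul_le_mul_of_nonneg_right (hM t ht) ht.1
  rw [integral_const_mul, integral_id] at h
  rw [meanDensity, div_mul_eq_mul_div, div_le_iff₀ (by positivity)]
  nlinarith

lemma le_meanDensity {x m : ℝ} (hx : 0 < x) (hm : ∀ t ∈ Icc 0 x, m ≤ κ t) :
    m ≤ meanDensity κ x := by
  have h : (∫ t in (0 : ℝ)..x, m * t) ≤ ∫ t in (0 : ℝ)..x, κ t * t :=
    integral_mono_on hx.le ((continuous_const_mul m).intervalIntegrable _ _)
      ((hκ.mul continuousOn_id).intervalIntegrable_of_Ici le_rfl hx.le)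
      fun t ht => mul_le_mul_of_nonneg_right (hm t ht) ht.1
  rw [integral_const_mul, integral_id] at h
  rw [meanDensity, div_mul_eq_mul_div, le_div_iff₀ (by positivity)]
  nlinarith

lemma hasDerivAt_meanDensity {x : ℝ} (hx : 0 < x) :
    HasDerivAt (meanDensity κ) (2 / x * (κ x - meanDensity κ x)) x := by
  have hκx : ContinuousAt κ x := hκ.continuousAt (Ici_mem_nhds hx)
  have hF : HasDerivAt (fun y => ∫ t in (0 : ℝ)..y, κ t * t) (κ x * x) x :=
    integral_hasDerivAt_right
      ((hκ.mul continuousOn_id).intervalIntegrable_of_Ici le_rfl hx.le)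
      (((hκ.mul continuousOn_id).mono Ioi_subset_Ici_self).stronglyMeasurableAtFilter
        isOpen_Ioi x hx)
      (hκx.mul continuousAt_id)
  have hinv : HasDerivAt (fun y : ℝ => 2 / y ^ 2) (-(4 / x ^ 3)) x :=
    ((hasDerivAt_const x (2 : ℝ)).div (hasDerivAt_pow 2 x) (by positivity)).congr_deriv
      (by field_simp; ring)
  exact (hinv.mul hF).congr_deriv (by rw [meanDensity]; field_simp; ring)

lemma continuousOn_meanDensity : ContinuousOn (meanDensity κ) (Ioi 0) :=
  fun _ hx => (hasDerivAt_meanDensity hκ hx).continuousAt.continuousWithinAt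

lemma strictAntiOn_meanDensity (hself : ∀ x, 0 < x → κ x < meanDensity κ x) :
    StrictAntiOn (meanDensity κ) (Ioi 0) := by
  refine strictAntiOn_of_deriv_neg (convex_Ioi 0) (continuousOn_meanDensity hκ) fun x hx => ?_
  rw [interior_Ioi, mem_Ioi] at hx
  rw [(hasDerivAt_meanDensity hκ hx).deriv]
  exact mul_neg_of_pos_of_neg (by positivity) (sub_neg.2 (hself x hx))

lemma tendsto_meanDensity_nhdsGT_zero : Tendsto (meanDensity κ) (𝓝[>] 0) (𝓝 (κ 0)) := by
  have hκ0 : Tendsto κ (𝓝[≥] 0) (𝓝 (κ 0)) := hκ 0 self_mem_Ici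
  refine tendsto_order.2 ⟨fun a ha => ?_, fun b hb => ?_⟩
  · obtain ⟨a', haa', ha'⟩ := exists_between ha
    obtain ⟨u, hu, hκu⟩ := mem_nhdsGE_iff_exists_Icc_subset.1 (hκ0 (Ioi_mem_nhds ha'))
    filter_upwards [Ioc_mem_nhdsGT hu] with x hx
    exact haa'.trans_le <| le_meanDensity hκ hx.1 fun t ht => (hκu ⟨ht.1, ht.2.trans hx.2⟩).le
  · obtain ⟨b', hb'b, hb'⟩ := exists_between hb
    obtain ⟨u, hu, hκu⟩ := mem_nhdsGE_iff_exists_Icc_subset.1 (hκ0 (Iio_mem_nhds hb'b))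
    filter_upwards [Ioc_mem_nhdsGT hu] with x hx
    exact (meanDensity_le hκ hx.1 fun t ht => (hκu ⟨ht.1, ht.2.trans hx.2⟩).le).trans_lt hb'

lemma meanDensity_lt_apply_zero (hself : ∀ x, 0 < x → κ x < meanDensity κ x) {x : ℝ}
    (hx : 0 < x) : meanDensity κ x < κ 0 := by
  have hx2 : 0 < x / 2 := half_pos hx
  refine (strictAntiOn_meanDensity hκ hself hx2 hx (half_lt_self hx)).trans_le ?_
  refine ge_of_tendsto (tendsto_meanDensity_nhdsGT_zero hκ) ?_
  filter_upwards [Ioc_mem_nhdsGT hx2] with t ht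
  exact (strictAntiOn_meanDensity hκ hself).antitoneOn ht.1 hx2 ht.2

lemma tendsto_meanDensity_atTop (hbdd : (fun x => x * κ x) =O[atTop] fun _ => (1 : ℝ)) :
    Tendsto (meanDensity κ) atTop (𝓝 0) := by
  have hF := integral_isBigO_id_atTop (f := fun t => κ t * t) (hκ.mul continuousOn_id)
    (hbdd.congr_left fun x => mul_comm x (κ x))
  have hinv : Tendsto (fun x : ℝ => 2 / x ^ 2 * id x) atTop (𝓝 0) := by
    refine ((tendsto_const_nhds (x := (2 : ℝ))).div_atTop tendsto_id).congr' ?_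
    filter_upwards [eventually_gt_atTop 0] with x hx
    simp only [id]
    field_simp
  exact ((isBigO_refl (fun x : ℝ => 2 / x ^ 2) atTop).mul hF).trans_tendsto hinv

end

theorem einstein_ring_exists_iff_general
    (κ : ℝ → ℝ) (C₂ : ℝ) (α : ℝ → ℝ)
    (hcont : ContinuousOn κ (Set.Ici 0))
    (hself : ∀ x : ℝ, 0 < x →
      κ x < (2 / x ^ 2) * ∫ t in (0 : ℝ)..x, κ t * t)
    (hlim : Filter.Tendsto (fun x => x * κ x) Filter.atTop (nhds C₂))
    (hα : ∀ x : ℝ, 0 < x → α x = (2 / x) * ∫ t in (0 : ℝ)..x, κ t * t) :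
    (∃ x : ℝ, 0 < x ∧ α x = x) ↔ 1 < κ 0 := by
  have hring : ∀ x, 0 < x → (α x = x ↔ meanDensity κ x = 1) := fun x hx => by
    rw [hα x hx]; exact deflection_eq_self_iff hx.ne'
  constructor
  · rintro ⟨x, hx, hαx⟩
    exact (hring x hx).1 hαx ▸ meanDensity_lt_apply_zero hcont hself hx
  · intro h1
    obtain ⟨a, ha1, ha⟩ := (((tendsto_meanDensity_nhdsGT_zero hcont).eventually
      (lt_mem_nhds h1)).and self_mem_nhdsWithin).exists
    obtain ⟨b, hb1, hab⟩ := (((tendsto_meanDensity_atTop hcont (hlim.isBigO_one ℝ)).eventually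
      (gt_mem_nhds one_pos)).and (eventually_ge_atTop a)).exists
    obtain ⟨x, hx, hx1⟩ := intermediate_value_Icc' hab
      ((continuousOn_meanDensity hcont).mono fun y hy => lt_of_lt_of_le ha hy.1) ⟨hb1.le, ha1.le⟩
    have hx0 : 0 < x := lt_of_lt_of_le ha hx.1
    exact ⟨x, hx0, (hring x hx0).2 hx1⟩

/-- **Existence.** For a continuous, self-gravitating
`κ : [0,∞) → [0,∞)` with `x·κ x → C₂` as `x → ∞` (`0 ≤ C₂ < ∞`), and the normalized
deflection angle `α x = (2/x) ∫₀ˣ κ t · t dt`, an Einstein ring (some `x > 0` with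
`α x = x`) exists if and only if `κ 0 > 1`. -/
theorem einstein_ring_exists_iff
    (κ : ℝ → ℝ) (C₂ : ℝ) (α : ℝ → ℝ)
    (hcont : ContinuousOn κ (Set.Ici 0))
    (hnonneg : ∀ x ∈ Set.Ici (0 : ℝ), 0 ≤ κ x)
    (hself : ∀ x : ℝ, 0 < x →
      κ x < (2 / x ^ 2) * ∫ t in (0 : ℝ)..x, κ t * t)
    (hC₂ : 0 ≤ C₂)
    (hlim : Filter.Tendsto (fun x => x * κ x) Filter.atTop (nhds C₂))
    (hα : ∀ x : ℝ, 0 < x → α x = (2 / x) * ∫ t in (0 : ℝ)..x, κ t * t) :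
    (∃ x : ℝ, 0 < x ∧ α x = x) ↔ 1 < κ 0 :=
  einstein_ring_exists_iff_general κ C₂ α hcont hself hlim hα
end

section
/- Let y > 0, 0 < β < 1, and 0 < m < 1. Then the quartic polynomial p(x) = x⁴ − y·x³ − (1 + β·m)·x² + y·β·m·x + β·m² has exactly two positive real roots and exactly two negative real roots, counted with multiplicity; in particular 0 is not a root, and the two-point-lens system always produces four (possibly coincident in pairs) images of an off-axis source. -/
/-!
With `k = β m`, the quartic equals `(x² − k)(x² − y x − 1) − k (1 − m)`, so it is negative at
`x = ±√k` and positive at `0` and at `x = ±(y + 2)`. The intermediate value theorem then gives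
a root in each of `(−(y+2), −√k)`, `(−√k, 0)`, `(0, √k)` and `(√k, y + 2)`; four distinct roots
of a monic quartic account for all of its roots.
-/

open Polynomial

theorem Polynomial.Monic.prod_X_sub_C_eq_of_nodup {R : Type*} [CommRing R] [IsDomain R]
    {p : R[X]} (hp : p.Monic) {s : Multiset R} (hs : s.Nodup)
    (hcard : Multiset.card s = p.natDegree) (hroot : ∀ r ∈ s, p.IsRoot r) :
    (s.map fun r => X - C r).prod = p := by
  have hsub : s ≤ p.roots := (Multiset.le_iff_subset hs).2 fun r hr =>
    (mem_roots hp.ne_zero).2 (hroot r hr)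
  have hroots : s = p.roots :=
    Multiset.eq_of_le_of_card_le hsub (hcard ▸ p.card_roots')
  subst hroots
  exact prod_multiset_X_sub_C_of_monic_of_roots_card_eq hp hcard

noncomputable def lensQuartic (y β m : ℝ) : ℝ[X] :=
  X ^ 4 - C y * X ^ 3 - C (1 + β * m) * X ^ 2 + C (y * (β * m)) * X + C (β * m ^ 2)

namespace lensQuartic

variable {y β m : ℝ}

theorem eval_eq (x : ℝ) : (lensQuartic y β m).eval x =
    x ^ 4 - y * x ^ 3 - (1 + β * m) * x ^ 2 + y * (β * m) * x + β * m ^ 2 := by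
  simp [lensQuartic]

theorem monic : (lensQuartic y β m).Monic := by
  unfold lensQuartic; monicity!

theorem natDegree : (lensQuartic y β m).natDegree = 4 := by
  unfold lensQuartic; compute_degree!

theorem eval_eq_mul_sub (x : ℝ) : (lensQuartic y β m).eval x =
    (x ^ 2 - β * m) * (x ^ 2 - y * x - 1) - β * m * (1 - m) := by
  rw [eval_eq]; ring

theorem eval_neg_of_sq_eq (hβ : 0 < β) (hm : m ∈ Set.Ioo (0 : ℝ) 1) {s : ℝ}
    (hs : s ^ 2 = β * m) : (lensQuartic y β m).eval s < 0 := by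
  rw [eval_eq_mul_sub, hs, sub_self, zero_mul, zero_sub, neg_neg_iff_pos]
  exact mul_pos (mul_pos hβ hm.1) (sub_pos.2 hm.2)

theorem eval_zero_pos (hβ : 0 < β) (hm : 0 < m) : 0 < (lensQuartic y β m).eval 0 := by
  rw [eval_eq]; simpa using mul_pos hβ (pow_pos hm 2)

theorem eval_pos_of_add_two_le_abs (hy : 0 ≤ y) (hβ : β ∈ Set.Ioo (0 : ℝ) 1)
    (hm : m ∈ Set.Ioo (0 : ℝ) 1) {x : ℝ} (hx : y + 2 ≤ |x|) :
    0 < (lensQuartic y β m).eval x := by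
  obtain ⟨hβ0, hβ1⟩ := hβ
  obtain ⟨hm0, hm1⟩ := hm
  have hbm : β * m < 1 := by nlinarith
  have hx2 : x ^ 2 = |x| ^ 2 := (sq_abs x).symm
  have hyx : y * x ≤ y * |x| := mul_le_mul_of_nonneg_left (le_abs_self x) hy
  have hleft : 3 ≤ x ^ 2 - β * m := by nlinarith
  have hright : 3 ≤ x ^ 2 - y * x - 1 := by nlinarith
  rw [eval_eq_mul_sub]
  nlinarith [mul_le_mul hleft hright (by norm_num) (by linarith), mul_pos hβ0 hm0]

theorem exists_roots (hy : 0 ≤ y) (hβ : β ∈ Set.Ioo (0 : ℝ) 1) (hm : m ∈ Set.Ioo (0 : ℝ) 1) :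
    ∃ r₁ r₂ r₃ r₄ : ℝ, r₁ < r₂ ∧ r₂ < 0 ∧ 0 < r₃ ∧ r₃ < r₄ ∧
      ∀ r ∈ ({r₁, r₂, r₃, r₄} : Multiset ℝ), (lensQuartic y β m).IsRoot r := by
  have hk : 0 < β * m := mul_pos hβ.1 hm.1
  set t := √(β * m)
  have ht : 0 < t := Real.sqrt_pos.2 hk
  have ht2 : t ^ 2 = β * m := Real.sq_sqrt hk.le
  have ht1 : t < y + 2 := by nlinarith [mul_lt_one_of_nonneg_of_lt_one_left hβ.1.le hβ.2 hm.2.le]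
  have hR : 0 < y + 2 := by linarith
  have hfar : 0 < (lensQuartic y β m).eval (y + 2) :=
    eval_pos_of_add_two_le_abs hy hβ hm (abs_of_pos hR).ge
  have hfar' : 0 < (lensQuartic y β m).eval (-(y + 2)) :=
    eval_pos_of_add_two_le_abs hy hβ hm (by rw [abs_neg, abs_of_pos hR])
  have hnear : (lensQuartic y β m).eval t < 0 := eval_neg_of_sq_eq hβ.1 hm ht2
  have hnear' : (lensQuartic y β m).eval (-t) < 0 :=
    eval_neg_of_sq_eq hβ.1 hm (by rw [neg_sq, ht2])
  have hzero : 0 < (lensQuartic y β m).eval 0 := eval_zero_pos hβ.1 hm.1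
  obtain ⟨r₁, ⟨-, hr₁⟩, h₁⟩ := intermediate_value_Ioo' (by linarith : -(y + 2) ≤ -t)
    (Polynomial.continuousOn _) ⟨hnear', hfar'⟩
  obtain ⟨r₂, ⟨hr₂, hr₂'⟩, h₂⟩ := intermediate_value_Ioo (by linarith : -t ≤ 0)
    (Polynomial.continuousOn _) ⟨hnear', hzero⟩
  obtain ⟨r₃, ⟨hr₃, hr₃'⟩, h₃⟩ := intermediate_value_Ioo' ht.le
    (Polynomial.continuousOn _) ⟨hnear, hzero⟩
  obtain ⟨r₄, ⟨hr₄, -⟩, h₄⟩ := intermediate_value_Ioo ht1.le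
    (Polynomial.continuousOn _) ⟨hnear, hfar⟩
  refine ⟨r₁, r₂, r₃, r₄, hr₁.trans hr₂, hr₂', hr₃, hr₃'.trans hr₄, ?_⟩
  simp only [Multiset.insert_eq_cons, Multiset.mem_cons, Multiset.mem_singleton]
  rintro r (rfl | rfl | rfl | rfl) <;> assumption

end lensQuartic

/-- For `y > 0`, `0 < β < 1`, `0 < m < 1`, the image quartic
`x⁴ − y·x³ − (1 + β·m)·x² + y·β·m·x + β·m²` has exactly two positive and exactly two
negative real roots, counted with multiplicity (so it factors as
`(x−a)(x−b)(x−c)(x−d)` with `a, b > 0` and `c, d < 0`); in particular `0` is not a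
root, and the two-point-lens system always produces four (possibly pairwise
coincident) images of an off-axis source. -/
theorem two_point_lens_quartic_sign_of_roots
    (y β m : ℝ) (hy : 0 < y) (hβ : β ∈ Set.Ioo (0 : ℝ) 1)
    (hm : m ∈ Set.Ioo (0 : ℝ) 1) :
    (∃ a b c d : ℝ, 0 < a ∧ 0 < b ∧ c < 0 ∧ d < 0 ∧
      ∀ x : ℝ,
        x ^ 4 - y * x ^ 3 - (1 + β * m) * x ^ 2 + y * (β * m) * x + β * m ^ 2
          = (x - a) * (x - b) * (x - c) * (x - d)) ∧
    (0 : ℝ) ^ 4 - y * 0 ^ 3 - (1 + β * m) * 0 ^ 2 + y * (β * m) * 0 + β * m ^ 2 ≠ 0 := by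
  obtain ⟨r₁, r₂, r₃, r₄, h₁₂, h₂, h₃, h₃₄, hroots⟩ := lensQuartic.exists_roots hy.le hβ hm
  have hnodup : ({r₁, r₂, r₃, r₄} : Multiset ℝ).Nodup := by
    simp only [Multiset.insert_eq_cons, Multiset.nodup_cons, Multiset.mem_cons,
      Multiset.mem_singleton, Multiset.nodup_singleton]
    grind
  have hprod := lensQuartic.monic.prod_X_sub_C_eq_of_nodup hnodup
    (by simp [lensQuartic.natDegree]) hroots
  refine ⟨⟨r₃, r₄, r₁, r₂, h₃, h₃.trans h₃₄, h₁₂.trans h₂, h₂, fun x => ?_⟩, ?_⟩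
  · rw [← lensQuartic.eval_eq, ← hprod]
    simp only [Multiset.insert_eq_cons, Multiset.map_cons, Multiset.map_singleton,
      Multiset.prod_cons, Multiset.prod_singleton, eval_mul, eval_sub, eval_X, eval_C]
    ring
  · rw [← lensQuartic.eval_eq]
    exact (lensQuartic.eval_zero_pos hβ.1 hm.1).ne'
end
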